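/- arXiv:math/0203014 — 2 statements merged into one kernel-verified Lean document; each statement's English description precedes it below -/
import Mathlib

section
/- For all λ > 0 and ε ≥ 0 there exist constants T = T(λ,ε) > 0 and K = K(λ,ε) > 0 such that every T-local (λ,ε)-quasigeodesic in a 1-hyperbolic geodesic metric space is a (K,K)-quasigeodesic. -/
set_option linter.unusedVariables false

/-- A geodesic segment from `a` to `b`: the image of an isometric
parameterization of the interval `[0, dist a b]`. -/
def IsGeodesicSegment {X : Type*} [MetricSpace X] (s : Set X) (a b : X) : Prop :=
  ∃ f : ℝ → X, f 0 = a ∧ f (dist a b) = b ∧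
    (∀ t₁ ∈ Set.Icc (0 : ℝ) (dist a b), ∀ t₂ ∈ Set.Icc (0 : ℝ) (dist a b),
      dist (f t₁) (f t₂) = |t₁ - t₂|) ∧
    s = f '' Set.Icc (0 : ℝ) (dist a b)

/-- A geodesic metric space: any two points are joined by a geodesic segment. -/
def GeodesicSpace (X : Type*) [MetricSpace X] : Prop :=
  ∀ a b : X, ∃ s : Set X, IsGeodesicSegment s a b

/-- `A` is contained in the `r`-neighborhood of `B`. -/
def InNbhd {X : Type*} [MetricSpace X] (A B : Set X) (r : ℝ) : Prop :=
  ∀ p ∈ A, ∃ q ∈ B, dist p q ≤ r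

/-- `δ`-hyperbolicity: every geodesic triangle is `δ`-thin, i.e. each side is
contained in the `δ`-neighborhood of the union of the other two sides. -/
def DeltaHyperbolic (X : Type*) [MetricSpace X] (δ : ℝ) : Prop :=
  ∀ a b c : X, ∀ sab sac sbc : Set X,
    IsGeodesicSegment sab a b → IsGeodesicSegment sac a c → IsGeodesicSegment sbc b c →
    InNbhd sab (sac ∪ sbc) δ

/-- Elementary Nielsen moves on an `n`-tuple of elements of a group. -/
inductive NielsenMove {G : Type*} [Group G] {n : ℕ} : (Fin n → G) → (Fin n → G) → Prop
  | inv (g : Fin n → G) (i : Fin n) : NielsenMove g (Function.update g i (g i)⁻¹)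
  | mul (g : Fin n → G) (i j : Fin n) (hij : i ≠ j) :
      NielsenMove g (Function.update g i (g i * g j))
  | swap (g : Fin n → G) (i j : Fin n) (hij : i ≠ j) :
      NielsenMove g (g ∘ Equiv.swap i j)

/-- Nielsen equivalence: a finite chain of elementary Nielsen moves. -/
def NielsenEquiv {G : Type*} [Group G] {n : ℕ} (M M' : Fin n → G) : Prop :=
  Relation.ReflTransGen NielsenMove M M'

/-- The word metric on the free group `F(x_1, …, x_n)`:
the length of the reduced word representing `w⁻¹ * v`. -/
noncomputable def freeDist {n : ℕ} (w v : FreeGroup (Fin n)) : ℝ :=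
  ((w⁻¹ * v).toWord.length : ℝ)

/-- The orbit map (on the subgroup generated by the tuple `g`, identified with
a quotient of the free group via `FreeGroup.lift g`) is a quasi-isometric embedding
with respect to the word metric of the basis `g`. -/
def OrbitQIEmbed {G X : Type*} [Group G] [MetricSpace X] [MulAction G X]
    {n : ℕ} (x : X) (g : Fin n → G) : Prop :=
  ∃ lam eps : ℝ, 1 ≤ lam ∧ 0 ≤ eps ∧ ∀ w v : FreeGroup (Fin n),
    lam⁻¹ * freeDist w v - eps ≤ dist ((FreeGroup.lift g w) • x) ((FreeGroup.lift g v) • x) ∧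
    dist ((FreeGroup.lift g w) • x) ((FreeGroup.lift g v) • x) ≤ lam * freeDist w v + eps

/-- The sum of the displacements `|g_i|_x` of the members of a tuple. -/
noncomputable def tupleLen {G X : Type*} [Group G] [MetricSpace X] [MulAction G X]
    {n : ℕ} (x : X) (M : Fin n → G) : ℝ :=
  ∑ i, dist x (M i • x)

/-- A minimal tuple: `|M|_x ≤ |M'|_x + 1` for every Nielsen-equivalent tuple `M'`. -/
def MinimalTuple {G X : Type*} [Group G] [MetricSpace X] [MulAction G X]
    {n : ℕ} (x : X) (M : Fin n → G) : Prop :=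
  ∀ M' : Fin n → G, NielsenEquiv M M' → tupleLen x M ≤ tupleLen x M' + 1

/-- A freely reduced word in letters `(i, ±1)`: no letter is followed by its inverse. -/
def ReducedWord {n : ℕ} (l : List (Fin n × Bool)) : Prop :=
  l.Chain' fun a b => a.1 = b.1 → a.2 = b.2

/-- The element of `G` represented by a word in the tuple `g` and its inverses. -/
def wordProd {G : Type*} [Group G] {n : ℕ} (g : Fin n → G) (l : List (Fin n × Bool)) : G :=
  (l.map fun p => if p.2 then g p.1 else (g p.1)⁻¹).prod

/-- Conclusion (2): for freely reduced `u = g_{i_1}^{ε_1} ⋯ g_{i_k}^{ε_k}`, any geodesic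
`[x, ux]` lies in the `d`-neighborhood of the broken path
`[x, g_{i_1}^{ε_1} x] ∪ ⋯ ∪ g_{i_1}^{ε_1} ⋯ g_{i_{k-1}}^{ε_{k-1}} [x, g_{i_k}^{ε_k} x]`. -/
def BrokenPathNbhd {G X : Type*} [Group G] [MetricSpace X] [MulAction G X]
    {n : ℕ} (x : X) (g : Fin n → G) (d : ℝ) : Prop :=
  ∀ l : List (Fin n × Bool), l ≠ [] → ReducedWord l →
    ∀ S : Set X, IsGeodesicSegment S x (wordProd g l • x) →
    ∀ seg : ℕ → Set X,
      (∀ j < l.length, IsGeodesicSegment (seg j)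
        (wordProd g (l.take j) • x) (wordProd g (l.take (j + 1)) • x)) →
      ∀ p ∈ S, ∃ j < l.length, ∃ q ∈ seg j, dist p q ≤ d

/-- For freely reduced `u`, any geodesic `[x, ux]` lies in the
`max_i (|g_i|_x/2 + d)`-neighborhood of the orbit `Ux`. -/
def SegInOrbitNbhd {G X : Type*} [Group G] [MetricSpace X] [MulAction G X]
    {n : ℕ} (x : X) (g : Fin n → G) (d : ℝ) : Prop :=
  ∀ l : List (Fin n × Bool), l ≠ [] → ReducedWord l →
    ∀ S : Set X, IsGeodesicSegment S x (wordProd g l • x) →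
    ∀ p ∈ S, ∃ (w : FreeGroup (Fin n)) (i : Fin n),
      dist p ((FreeGroup.lift g w) • x) ≤ dist x (g i • x) / 2 + d

/-- Conclusion (3): for freely reduced `u = g_{i_1}^{ε_1} ⋯ g_{i_k}^{ε_k}` one has
`|u|_x ≥ |g_{i_j}|_x - d` for every letter occurring in `u`. -/
def LetterBound {G X : Type*} [Group G] [MetricSpace X] [MulAction G X]
    {n : ℕ} (x : X) (g : Fin n → G) (d : ℝ) : Prop :=
  ∀ l : List (Fin n × Bool), ReducedWord l → ∀ j : Fin l.length,
    dist x (g (l.get j).1 • x) - d ≤ dist x (wordProd g l • x)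

/-- Conclusion (4): every subsegment of a geodesic `[x, ux]`, `u ∈ U`, of length
greater than `d₄` meets the `max_i (|g_i|_x/2 - c)`-neighborhood of the orbit `Ux`. -/
def SubsegMeetsOrbit {G X : Type*} [Group G] [MetricSpace X] [MulAction G X]
    {n : ℕ} (x : X) (g : Fin n → G) (d₄ c : ℝ) : Prop :=
  ∀ w : FreeGroup (Fin n), ∀ S : Set X, IsGeodesicSegment S x ((FreeGroup.lift g w) • x) →
    ∀ a ∈ S, ∀ b ∈ S, ∀ τ : Set X, IsGeodesicSegment τ a b → τ ⊆ S → d₄ < dist a b →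
    ∃ p ∈ τ, ∃ (v : FreeGroup (Fin n)) (i : Fin n),
      dist p ((FreeGroup.lift g v) • x) ≤ dist x (g i • x) / 2 - c

/-- The dichotomy of Theorem 11 for an `(m+1)`-tuple `f` at base point `x`, with
constants `d₁, d₂, d₃, d₄` and parameter `c`. -/
def Thm11Alt {G X : Type*} [Group G] [MetricSpace X] [MulAction G X]
    {m : ℕ} (x : X) (f : Fin (m + 1) → G) (d₁ d₂ d₃ d₄ c : ℝ) : Prop :=
  (∃ f' : Fin (m + 1) → G, NielsenEquiv f f' ∧ (⨅ y : X, dist y (f' 0 • y)) ≤ d₁) ∨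
  (Function.Injective ⇑(FreeGroup.lift f) ∧ OrbitQIEmbed x f ∧ BrokenPathNbhd x f d₂ ∧
    SegInOrbitNbhd x f d₂ ∧ LetterBound x f d₃ ∧ SubsegMeetsOrbit x f d₄ c)

/-- A naturally parameterized `(λ, ε)`-quasigeodesic on the set `I ⊆ ℝ`. -/
def IsQuasigeodesicOn {X : Type*} [MetricSpace X] (α : ℝ → X) (I : Set ℝ)
    (lam eps : ℝ) : Prop :=
  (∀ s ∈ I, ∀ t ∈ I, dist (α s) (α t) ≤ |s - t|) ∧
  (∀ s ∈ I, ∀ t ∈ I, |s - t| ≤ lam * dist (α s) (α t) + eps)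

/-- A naturally parameterized `T`-local `(λ, ε)`-quasigeodesic on the set `I ⊆ ℝ`. -/
def IsLocalQuasigeodesicOn {X : Type*} [MetricSpace X] (α : ℝ → X) (I : Set ℝ)
    (T lam eps : ℝ) : Prop :=
  (∀ s ∈ I, ∀ t ∈ I, dist (α s) (α t) ≤ |s - t|) ∧
  (∀ s ∈ I, ∀ t ∈ I, |s - t| ≤ T → |s - t| ≤ lam * dist (α s) (α t) + eps)

/-- The data provided by Lemma 15 for the pair `(g, h)`: a point `r` together with
geodesic segments `[x,r]`, `[r,gx]`, `[r,ghx]` such that the broken paths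
`w_g = [x,r] ∪ [r,gx]`, `w_h = [gx,r] ∪ [r,ghx]`, `w_{gh} = [x,r] ∪ [r,ghx]` have
lengths at most `|g|_x + 2`, `|h|_x + 2`, `|gh|_x + 2` respectively and each lies in
the `2`-neighborhood of any geodesic segment joining its endpoints. -/
def Lemma15Data {G X : Type*} [Group G] [MetricSpace X] [MulAction G X]
    (x : X) (g h : G) (r : X) (sxr srg srgh : Set X) : Prop :=
  IsGeodesicSegment sxr x r ∧ IsGeodesicSegment srg r (g • x) ∧
  IsGeodesicSegment srgh r ((g * h) • x) ∧
  dist x r + dist r (g • x) ≤ dist x (g • x) + 2 ∧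
  dist (g • x) r + dist r ((g * h) • x) ≤ dist x (h • x) + 2 ∧
  dist x r + dist r ((g * h) • x) ≤ dist x ((g * h) • x) + 2 ∧
  (∀ S : Set X, IsGeodesicSegment S x (g • x) → InNbhd (sxr ∪ srg) S 2) ∧
  (∀ S : Set X, IsGeodesicSegment S (g • x) ((g * h) • x) → InNbhd (srg ∪ srgh) S 2) ∧
  (∀ S : Set X, IsGeodesicSegment S x ((g * h) • x) → InNbhd (sxr ∪ srgh) S 2)

/-- Conclusion (4) of Proposition 13, for products
`w = h₁ gₙ^{ε₁} h₂ gₙ^{ε₂} ⋯ hₗ gₙ^{εₗ} h_{l+1}` with `hᵢ ∈ H`. -/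
def Prop13Four {G X : Type*} [Group G] [MetricSpace X] [MulAction G X]
    (x : X) (H : Subgroup G) (gn : G) (T L : ℝ) : Prop :=
  ∀ l : ℕ, 1 ≤ l → ∀ (h : ℕ → G) (e : ℕ → ℤ),
    (∀ i ≤ l, h i ∈ H) →
    (∀ i < l, e i = 1 ∨ e i = -1) →
    (∀ i, 1 ≤ i → i < l → e (i - 1) = -(e i) → h i ≠ 1) →
    ∀ A : ℕ → G, A 0 = 1 → (∀ i < l, A (i + 1) = A i * h i * gn ^ (e i)) →
    ∀ S : Set X, IsGeodesicSegment S x ((A l * h l) • x) →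
    ∀ a ∈ S, ∀ b ∈ S, ∀ I : Set X, IsGeodesicSegment I a b → I ⊆ S → 10 * T ≤ dist a b →
    ∃ u v : G,
      ((∃ j < l, u = A j * h j ∧ v = A j * h j * gn ^ (e j)) ∨
        (∃ j ≤ l, u = A j ∧ v = A j * h j)) ∧
      ∃ Seg : Set X, IsGeodesicSegment Seg (u • x) (v • x) ∧
        ∃ a' ∈ Seg, ∃ b' ∈ Seg, ∃ τ : Set X, IsGeodesicSegment τ a' b' ∧ τ ⊆ Seg ∧
          T ≤ dist a' b' ∧ InNbhd τ I (2 * L + 100)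

/-!
Sample the local quasigeodesic at spacing `h = 2 ^ N`, half the scale `T = 2 ^ (N + 1)` on which
it is a genuine quasigeodesic. Consecutive samples are at distance at least `(h - ε) / λ`. On a
window of length `T` the path stays within `c = O(λ N + ε)` of a geodesic (bisect to see that the
geodesic is near the path, then walk along the geodesic to see the converse), so each sample has
Gromov product at most `c` with respect to its two neighbours. As `c` grows linearly in `N` and `h`
exponentially, for large `N` the steps beat `2 (c + 3δ)`; the four-point condition then keeps
the Gromov products `(x₀|x_{m+1})_{x_m}` along the whole chain below `c + 3δ`, so the distance
from the first sample grows linearly in the number of samples.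
-/

open Set

section

variable {X : Type*} [MetricSpace X]

namespace IsGeodesicSegment

variable {S : Set X} {a b p : X}

theorem dist_add_dist (hS : IsGeodesicSegment S a b) (hp : p ∈ S) :
    dist a p + dist p b = dist a b := by
  obtain ⟨f, hf0, hfL, hiso, rfl⟩ := hS
  obtain ⟨u, hu, rfl⟩ := hp
  have h0 := hiso 0 ⟨le_rfl, dist_nonneg⟩ u hu
  have hL := hiso u hu (dist a b) ⟨dist_nonneg, le_rfl⟩
  rw [hf0] at h0
  rw [hfL] at hL
  rw [h0, hL, abs_of_nonpos (by linarith [hu.1]), abs_of_nonpos (by linarith [hu.2])]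
  ring

theorem exists_mem_dist_eq (hS : IsGeodesicSegment S a b) {u : ℝ}
    (hu : u ∈ Icc 0 (dist a b)) : ∃ p ∈ S, dist a p = u := by
  obtain ⟨f, hf0, -, hiso, rfl⟩ := hS
  refine ⟨f u, mem_image_of_mem f hu, ?_⟩
  rw [← hf0, hiso 0 ⟨le_rfl, dist_nonneg⟩ u hu, zero_sub, abs_neg, abs_of_nonneg hu.1]

theorem symm (hS : IsGeodesicSegment S a b) : IsGeodesicSegment S b a := by
  obtain ⟨f, hf0, hfL, hiso, rfl⟩ := hS
  have hflip : ∀ u ∈ Icc 0 (dist a b), dist a b - u ∈ Icc 0 (dist a b) :=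
    fun u hu => ⟨by linarith [hu.2], by linarith [hu.1]⟩
  refine ⟨fun u => f (dist a b - u), by simpa using hfL, by simpa [dist_comm b a] using hf0,
    fun s hs t ht => ?_, ?_⟩
  · rw [dist_comm b a] at hs ht
    rw [hiso _ (hflip s hs) _ (hflip t ht), ← abs_neg]
    ring_nf
  · rw [dist_comm b a]
    ext p
    constructor
    · rintro ⟨u, hu, rfl⟩
      exact ⟨dist a b - u, hflip u hu, by simp⟩
    · rintro ⟨u, hu, rfl⟩
      exact ⟨dist a b - u, hflip u hu, rfl⟩

end IsGeodesicSegment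

/-- `gromovProduct x y w` is `(x|y)_w`: the base point comes last. -/
noncomputable def gromovProduct (x y w : X) : ℝ := (dist x w + dist y w - dist x y) / 2

theorem gromovProduct_comm (x y w : X) : gromovProduct x y w = gromovProduct y x w := by
  rw [gromovProduct, gromovProduct, dist_comm x y, add_comm (dist x w)]

theorem gromovProduct_le_dist_of_mem {S : Set X} {x z : X} (hS : IsGeodesicSegment S x z)
    (w : X) {q : X} (hq : q ∈ S) : gromovProduct x z w ≤ dist w q := by
  have := hS.dist_add_dist hq
  have := dist_triangle x q w
  have := dist_triangle z q w
  rw [gromovProduct, dist_comm q z, dist_comm q w] at *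
  linarith

def GromovHyperbolic (X : Type*) [MetricSpace X] (δ : ℝ) : Prop :=
  ∀ x y z w : X, min (gromovProduct x y w) (gromovProduct y z w) - δ ≤ gromovProduct x z w

/-- The witness is the point of `[x, z]` at distance `(z|w)_x` from `x`. -/
theorem exists_mem_dist_le_gromovProduct (hG : GeodesicSpace X) {δ : ℝ}
    (hδ : DeltaHyperbolic X δ) {S : Set X} {x z : X} (hS : IsGeodesicSegment S x z) (w : X) :
    ∃ m ∈ S, dist w m ≤ gromovProduct x z w + 2 * δ := by
  have hu : gromovProduct z w x ∈ Icc 0 (dist x z) := by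
    have := dist_triangle z x w
    have := dist_triangle w z x
    simp only [gromovProduct, mem_Icc]
    constructor <;> linarith [dist_comm x w, dist_comm x z, dist_comm z w]
  obtain ⟨m, hm, hxm⟩ := hS.exists_mem_dist_eq hu
  have hmz := hS.dist_add_dist hm
  obtain ⟨Sxw, hSxw⟩ := hG x w
  obtain ⟨Szw, hSzw⟩ := hG z w
  obtain ⟨q, hq, hmq⟩ := hδ x z w S Sxw Szw hS hSxw hSzw m hm
  refine ⟨m, hm, ?_⟩
  have := dist_triangle w q m
  simp only [gromovProduct] at hxm ⊢
  rcases hq with hq | hq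
  · have := hSxw.dist_add_dist hq
    have := dist_triangle x q m
    linarith [dist_comm q m, dist_comm w q, dist_comm x z, dist_comm x w]
  · have := hSzw.dist_add_dist hq
    have := dist_triangle z q m
    linarith [dist_comm q m, dist_comm w q, dist_comm z w, dist_comm x z, dist_comm x w,
      dist_comm m z]

theorem DeltaHyperbolic.gromovHyperbolic (hG : GeodesicSpace X) {δ : ℝ}
    (hδ : DeltaHyperbolic X δ) : GromovHyperbolic X (3 * δ) := by
  intro x y z w
  obtain ⟨S, hS⟩ := hG x z
  obtain ⟨m, hm, hwm⟩ := exists_mem_dist_le_gromovProduct hG hδ hS w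
  obtain ⟨Sxy, hSxy⟩ := hG x y
  obtain ⟨Szy, hSzy⟩ := hG z y
  obtain ⟨q, hq, hmq⟩ := hδ x z y S Sxy Szy hS hSxy hSzy m hm
  have := dist_triangle w m q
  rcases hq with hq | hq
  · linarith [gromovProduct_le_dist_of_mem hSxy w hq,
      min_le_left (gromovProduct x y w) (gromovProduct y z w)]
  · linarith [gromovProduct_le_dist_of_mem hSzy w hq, gromovProduct_comm z y w,
      min_le_right (gromovProduct x y w) (gromovProduct y z w)]

namespace GromovHyperbolic

variable {δ : ℝ}

theorem nonneg [Nonempty X] (h4 : GromovHyperbolic X δ) : 0 ≤ δ := by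
  obtain ⟨x⟩ := ‹Nonempty X›
  simpa [gromovProduct] using h4 x x x x

variable {x : ℕ → X} {n : ℕ} {c D : ℝ}

/-- If `(x₀|x_{m+2})_{x_{m+1}}` were large, then so would be `(x_m|x₀)_{x_{m+1}}`, which is
`d(x_m, x_{m+1}) - (x₀|x_{m+1})_{x_m}`, and the four-point condition at `x_{m+1}` would make
`(x_m|x_{m+2})_{x_{m+1}}` large. -/
theorem gromovProduct_chain_le (h4 : GromovHyperbolic X δ) (hc : 0 ≤ c)
    (hcD : 2 * (c + δ) < D) (hstep : ∀ i < n, D ≤ dist (x i) (x (i + 1)))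
    (hgp : ∀ i, i + 2 ≤ n → gromovProduct (x i) (x (i + 2)) (x (i + 1)) ≤ c) :
    ∀ m < n, gromovProduct (x 0) (x (m + 1)) (x m) ≤ c + δ := by
  intro m
  induction m with
  | zero =>
    intro _
    have : Nonempty X := ⟨x 0⟩
    have : gromovProduct (x 0) (x 1) (x 0) = 0 := by
      simp [gromovProduct, dist_comm (x 1) (x 0)]
    linarith [h4.nonneg]
  | succ m ih =>
    intro hm
    have hprev := ih (by omega)
    have hback : gromovProduct (x m) (x 0) (x (m + 1)) =
        dist (x m) (x (m + 1)) - gromovProduct (x 0) (x (m + 1)) (x m) := by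
      simp only [gromovProduct]
      rw [dist_comm (x m) (x 0), dist_comm (x (m + 1)) (x m)]
      ring
    have h4m := h4 (x m) (x 0) (x (m + 2)) (x (m + 1))
    have hDm := hstep m (by omega)
    have hgpm := hgp m (by omega)
    by_contra! hbig
    have : c + δ < min (gromovProduct (x m) (x 0) (x (m + 1)))
        (gromovProduct (x 0) (x (m + 2)) (x (m + 1))) :=
      lt_min (by linarith) hbig
    linarith

theorem mul_le_dist_of_chain (h4 : GromovHyperbolic X δ) (hc : 0 ≤ c)
    (hcD : 2 * (c + δ) < D) (hstep : ∀ i < n, D ≤ dist (x i) (x (i + 1)))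
    (hgp : ∀ i, i + 2 ≤ n → gromovProduct (x i) (x (i + 2)) (x (i + 1)) ≤ c) :
    n * (D - 2 * (c + δ)) ≤ dist (x 0) (x n) := by
  have hchain := h4.gromovProduct_chain_le hc hcD hstep hgp
  suffices ∀ m ≤ n, m * (D - 2 * (c + δ)) ≤ dist (x 0) (x m) from this n le_rfl
  intro m
  induction m with
  | zero => simp
  | succ m ih =>
    intro hm
    have hsplit : dist (x 0) (x (m + 1)) = dist (x 0) (x m) + dist (x m) (x (m + 1))
        - 2 * gromovProduct (x 0) (x (m + 1)) (x m) := by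
      simp only [gromovProduct]
      rw [dist_comm (x (m + 1)) (x m)]
      ring
    have := ih (by omega)
    have := hstep m (by omega)
    have := hchain m (by omega)
    push_cast
    linarith

end GromovHyperbolic

/-- Each halving of the parameter interval costs one thin triangle, i.e. `δ`. -/
theorem exists_dist_le_of_isGeodesicSegment (hG : GeodesicSpace X) {δ : ℝ}
    (hδ : DeltaHyperbolic X δ) {γ : ℝ → X} (N : ℕ) {a b : ℝ} (hab : a ≤ b)
    (hlen : b - a ≤ 2 ^ N) (hγ : ∀ s ∈ Icc a b, ∀ t ∈ Icc a b, dist (γ s) (γ t) ≤ |s - t|)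
    {S : Set X} (hS : IsGeodesicSegment S (γ a) (γ b)) {p : X} (hp : p ∈ S) :
    ∃ t ∈ Icc a b, dist p (γ t) ≤ N * δ + 1 := by
  induction N generalizing a b S p with
  | zero =>
    refine ⟨a, left_mem_Icc.2 hab, ?_⟩
    have := hS.dist_add_dist hp
    have := hγ a (left_mem_Icc.2 hab) b (right_mem_Icc.2 hab)
    rw [abs_sub_comm, abs_of_nonneg (sub_nonneg.2 hab)] at this
    norm_num at hlen ⊢
    linarith [dist_comm p (γ a), dist_nonneg (x := p) (y := γ b)]
  | succ N ih =>
    set m := (a + b) / 2 with hm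
    have ham : a ≤ m := by linarith
    have hmb : m ≤ b := by linarith
    have hhalf : m - a ≤ 2 ^ N ∧ b - m ≤ 2 ^ N := by
      rw [pow_succ] at hlen
      constructor <;> linarith
    obtain ⟨S₁, hS₁⟩ := hG (γ a) (γ m)
    obtain ⟨S₂, hS₂⟩ := hG (γ m) (γ b)
    obtain ⟨q, hq, hpq⟩ := hδ _ _ _ S S₁ S₂ hS hS₁ hS₂.symm p hp
    have hhalves : ∀ a' b', a' ≤ b' → Icc a' b' ⊆ Icc a b → b' - a' ≤ 2 ^ N →
        ∀ {T : Set X}, IsGeodesicSegment T (γ a') (γ b') → q ∈ T →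
        ∃ t ∈ Icc a b, dist p (γ t) ≤ (N + 1 : ℕ) * δ + 1 := by
      intro a' b' hab' hsub hlen' T hT hqT
      obtain ⟨t, ht, hqt⟩ := ih hab' hlen' (fun s hs t ht => hγ s (hsub hs) t (hsub ht)) hT hqT
      refine ⟨t, hsub ht, ?_⟩
      push_cast
      linarith [dist_triangle p q (γ t)]
    rcases hq with hq | hq
    · exact hhalves a m ham (Icc_subset_Icc le_rfl hmb) hhalf.1 hS₁ hq
    · exact hhalves m b hmb (Icc_subset_Icc ham le_rfl) hhalf.2 hS₂ hq

theorem exists_abs_sub_le_of_abs_sub_succ_le {τ : ℕ → ℝ} {t C : ℝ} {k : ℕ} (h0 : τ 0 ≤ t)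
    (hk : t ≤ τ k) (hstep : ∀ j, |τ j - τ (j + 1)| ≤ C) : ∃ j, |t - τ j| ≤ C := by
  induction k with
  | zero =>
    refine ⟨0, ?_⟩
    rw [le_antisymm h0 hk, sub_self, abs_zero]
    exact (abs_nonneg _).trans (hstep 0)
  | succ k ih =>
    by_cases htk : t ≤ τ k
    · exact ih htk
    · have := abs_le.1 (hstep k)
      exact ⟨k + 1, abs_le.2 ⟨by linarith, by linarith⟩⟩

/-- Walk along the geodesic in unit steps and shadow each step by a parameter of the
quasigeodesic; consecutive shadows are close in parameter, so every parameter is close to one. -/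
theorem exists_mem_dist_le_of_isQuasigeodesicOn (hG : GeodesicSpace X) {δ : ℝ}
    (hδ : DeltaHyperbolic X δ) {α : ℝ → X} {lam eps : ℝ} (hlam : 0 ≤ lam) (N : ℕ) {a b : ℝ}
    (hlen : b - a ≤ 2 ^ N) (hα : IsQuasigeodesicOn α (Icc a b) lam eps) {S : Set X}
    (hS : IsGeodesicSegment S (α a) (α b)) {t : ℝ} (ht : t ∈ Icc a b) :
    ∃ q ∈ S, dist (α t) q ≤ lam * (2 * (N * δ + 1) + 1) + eps + (N * δ + 1) := by
  have hab : a ≤ b := ht.1.trans ht.2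
  have hshadow := fun {p} (hp : p ∈ S) =>
    exists_dist_le_of_isGeodesicSegment hG hδ N hab hlen hα.1 hS hp
  obtain ⟨f, hf0, hfL, hiso, rfl⟩ := id hS
  set L := dist (α a) (α b)
  set r : ℝ := N * δ + 1
  have hmem : ∀ j : ℕ, min (j : ℝ) L ∈ Icc 0 L :=
    fun j => ⟨le_min j.cast_nonneg dist_nonneg, min_le_right _ _⟩
  have hr : 0 ≤ r := by
    obtain ⟨_, _, h⟩ := hshadow (mem_image_of_mem f (hmem 0))
    exact dist_nonneg.trans h
  -- the shadows start at `a` and end at `b`, so that they pass every parameter `t`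
  have hsample : ∀ j : ℕ, ∃ τ ∈ Icc a b, dist (f (min j L)) (α τ) ≤ r ∧
      (j = 0 → τ = a) ∧ (0 < j → L ≤ j → τ = b) := by
    intro j
    rcases Nat.eq_zero_or_pos j with rfl | hj
    · refine ⟨a, left_mem_Icc.2 hab, ?_, fun _ => rfl, by simp⟩
      rwa [Nat.cast_zero, min_eq_left dist_nonneg, hf0, dist_self]
    by_cases hjL : L ≤ j
    · refine ⟨b, right_mem_Icc.2 hab, ?_, by omega, fun _ _ => rfl⟩
      simpa [min_eq_right hjL, hfL] using hr
    · obtain ⟨τ, hτ, hd⟩ := hshadow (mem_image_of_mem f (hmem j))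
      exact ⟨τ, hτ, hd, by omega, fun _ h => absurd h hjL⟩
  choose τ hτ hτr hτ0 hτL using hsample
  have hstep : ∀ j, |τ j - τ (j + 1)| ≤ lam * (2 * r + 1) + eps := by
    intro j
    have hunit : dist (f (min j L)) (f (min (j + 1 : ℕ) L)) ≤ 1 := by
      rw [hiso _ (hmem j) _ (hmem (j + 1))]
      refine (abs_min_sub_min_le_max _ _ _ _).trans ?_
      simp
    have hclose : dist (α (τ j)) (α (τ (j + 1))) ≤ 2 * r + 1 := by
      have := dist_triangle4 (α (τ j)) (f (min j L)) (f (min (j + 1 : ℕ) L)) (α (τ (j + 1)))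
      linarith [hτr j, hτr (j + 1), dist_comm (α (τ j)) (f (min j L))]
    linarith [hα.2 _ (hτ j) _ (hτ (j + 1)), mul_le_mul_of_nonneg_left hclose hlam]
  obtain ⟨j, hj⟩ := exists_abs_sub_le_of_abs_sub_succ_le (t := t) (k := ⌈L⌉₊ + 1)
    (by rw [hτ0 0 rfl]; exact ht.1)
    (by rw [hτL _ (by omega) (by push_cast; linarith [Nat.le_ceil L])]; exact ht.2) hstep
  refine ⟨f (min j L), mem_image_of_mem f (hmem j), ?_⟩
  linarith [dist_triangle (α t) (α (τ j)) (f (min j L)), hα.1 t ht (τ j) (hτ j), hτr j,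
    dist_comm (α (τ j)) (f (min j L))]

theorem gromovProduct_le_of_isQuasigeodesicOn (hG : GeodesicSpace X) {δ : ℝ}
    (hδ : DeltaHyperbolic X δ) {α : ℝ → X} {lam eps : ℝ} (hlam : 0 ≤ lam) (N : ℕ) {a b : ℝ}
    (hlen : b - a ≤ 2 ^ N) (hα : IsQuasigeodesicOn α (Icc a b) lam eps) {m : ℝ}
    (hm : m ∈ Icc a b) :
    gromovProduct (α a) (α b) (α m) ≤ lam * (2 * (N * δ + 1) + 1) + eps + (N * δ + 1) := by
  obtain ⟨S, hS⟩ := hG (α a) (α b)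
  obtain ⟨q, hq, hmq⟩ := exists_mem_dist_le_of_isQuasigeodesicOn hG hδ hlam N hlen hα hS hm
  exact (gromovProduct_le_dist_of_mem hS _ hq).trans hmq

theorem IsQuasigeodesicOn.mono {α : ℝ → X} {I : Set ℝ} {lam eps lam' eps' : ℝ}
    (hα : IsQuasigeodesicOn α I lam eps) (hlam : lam ≤ lam') (heps : eps ≤ eps') :
    IsQuasigeodesicOn α I lam' eps' :=
  ⟨hα.1, fun s hs t ht =>
    (hα.2 s hs t ht).trans (add_le_add (mul_le_mul_of_nonneg_right hlam dist_nonneg) heps)⟩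

namespace IsLocalQuasigeodesicOn

variable {α : ℝ → X} {I : Set ℝ}

theorem isQuasigeodesicOn_Icc {T lam eps a b : ℝ} (hα : IsLocalQuasigeodesicOn α I T lam eps)
    (hI : I.OrdConnected) (ha : a ∈ I) (hb : b ∈ I) (hab : b - a ≤ T) :
    IsQuasigeodesicOn α (Icc a b) lam eps := by
  have hsub := hI.out ha hb
  refine ⟨fun s hs t ht => hα.1 s (hsub hs) t (hsub ht),
    fun s hs t ht => hα.2 s (hsub hs) t (hsub ht) ?_⟩
  rw [abs_le]
  constructor <;> linarith [hs.1, hs.2, ht.1, ht.2]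

variable {δ lam eps h c ρ : ℝ}

theorem mul_le_dist_of_gromovProduct_le (h4 : GromovHyperbolic X δ) (hI : I.OrdConnected)
    (hα : IsLocalQuasigeodesicOn α I (2 * h) lam eps) (hlam : 0 < lam) (hh : 0 < h)
    (hc : 0 ≤ c) (hρ : 0 < ρ) (hgap : lam * (ρ + 2 * (c + δ)) + eps ≤ h)
    (hgp : ∀ a ∈ I, a + 2 * h ∈ I → gromovProduct (α a) (α (a + 2 * h)) (α (a + h)) ≤ c)
    {s : ℝ} (hs : s ∈ I) {n : ℕ} (hn : s + n * h ∈ I) :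
    n * ρ ≤ dist (α s) (α (s + n * h)) := by
  have hmem : ∀ i ≤ n, s + i * h ∈ I := fun i hi => hI.out hs hn
    ⟨le_add_of_nonneg_right (by positivity), by gcongr⟩
  have hstep : ∀ i < n, ρ + 2 * (c + δ) ≤ dist (α (s + i * h)) (α (s + (i + 1 : ℕ) * h)) := by
    intro i hi
    have hdiff : |s + i * h - (s + (i + 1 : ℕ) * h)| = h := by
      push_cast
      rw [show s + i * h - (s + (i + 1) * h) = -h by ring, abs_neg, abs_of_pos hh]
    have := hα.2 _ (hmem i hi.le) _ (hmem (i + 1) hi) (by rw [hdiff]; linarith)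
    rw [hdiff] at this
    exact le_of_mul_le_mul_left (by linarith) hlam
  have hchain := h4.mul_le_dist_of_chain (x := fun i : ℕ => α (s + i * h)) hc (by linarith)
    hstep fun i hi => by
      have := hgp _ (hmem i (by omega)) (by convert hmem (i + 2) hi using 1; push_cast; ring)
      convert this using 3 <;> push_cast <;> ring
  simpa using hchain

theorem isQuasigeodesicOn_of_gromovProduct_le (h4 : GromovHyperbolic X δ) (hI : I.OrdConnected)
    (hα : IsLocalQuasigeodesicOn α I (2 * h) lam eps) (hlam : 0 < lam) (hh : 0 < h)
    (hc : 0 ≤ c) (hρ : 0 < ρ) (hgap : lam * (ρ + 2 * (c + δ)) + eps ≤ h)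
    (hgp : ∀ a ∈ I, a + 2 * h ∈ I → gromovProduct (α a) (α (a + 2 * h)) (α (a + h)) ≤ c) :
    IsQuasigeodesicOn α I (h / ρ) (h ^ 2 / ρ + h) := by
  have key : ∀ s ∈ I, ∀ t ∈ I, s ≤ t → t - s ≤ h / ρ * dist (α s) (α t) + (h ^ 2 / ρ + h) := by
    intro s hs t ht hst
    set n := ⌊(t - s) / h⌋₊
    have hnh : n * h ≤ t - s := (le_div_iff₀ hh).1 (Nat.floor_le (div_nonneg (by linarith) hh.le))
    have hnh' : t - s < n * h + h := by
      have := (div_lt_iff₀ hh).1 (Nat.lt_floor_add_one ((t - s) / h))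
      linarith
    have hn : s + n * h ∈ I := hI.out hs ht ⟨le_add_of_nonneg_right (by positivity), by linarith⟩
    have hsample := hα.mul_le_dist_of_gromovProduct_le h4 hI hlam hh hc hρ hgap hgp hs hn
    have hlast : dist (α (s + n * h)) (α t) ≤ h := by
      have := hα.1 _ hn t ht
      rw [abs_of_nonpos (by linarith)] at this
      linarith
    have hn_le : (n : ℝ) ≤ (dist (α s) (α t) + h) / ρ := by
      rw [le_div_iff₀ hρ]
      linarith [dist_triangle (α s) (α t) (α (s + n * h)), dist_comm (α t) (α (s + n * h))]
    calc t - s ≤ n * h + h := hnh'.le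
      _ ≤ (dist (α s) (α t) + h) / ρ * h + h := by gcongr
      _ = h / ρ * dist (α s) (α t) + (h ^ 2 / ρ + h) := by ring
  refine ⟨hα.1, fun s hs t ht => ?_⟩
  rcases le_total s t with hst | hst
  · rw [abs_sub_comm, abs_of_nonneg (sub_nonneg.2 hst)]
    exact key s hs t ht hst
  · rw [abs_of_nonneg (sub_nonneg.2 hst), dist_comm]
    exact key t ht s hs hst

end IsLocalQuasigeodesicOn

theorem exists_mul_add_le_two_pow (A B : ℝ) : ∃ N : ℕ, A * N + B ≤ 2 ^ N := by
  have hlin := (isLittleO_coe_const_pow_of_one_lt (R := ℝ) one_lt_two).def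
    (c := 1 / (2 * (|A| + 1))) (by positivity)
  have hconst := (tendsto_pow_atTop_atTop_of_one_lt (one_lt_two (α := ℝ))).eventually_ge_atTop
    (2 * |B|)
  obtain ⟨N, hN, hN'⟩ := (hlin.and hconst).exists
  rw [Real.norm_natCast, norm_pow, Real.norm_two] at hN
  refine ⟨N, ?_⟩
  have hA : A * N ≤ 2 ^ N / 2 := calc
    A * N ≤ (|A| + 1) * N := by gcongr; linarith [le_abs_self A]
    _ ≤ (|A| + 1) * (1 / (2 * (|A| + 1)) * 2 ^ N) := by gcongr
    _ = 2 ^ N / 2 := by field_simp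
  linarith [le_abs_self B]

end

/-- **Lemma 6(b).** For all `λ > 0` and `ε ≥ 0` there exist `T = T(λ,ε) > 0` and
`K = K(λ,ε) > 0` such that every `T`-local `(λ,ε)`-quasigeodesic in a `1`-hyperbolic
geodesic metric space is a `(K,K)`-quasigeodesic. -/
theorem local_to_global_quasigeodesic :
    ∀ lam eps : ℝ, 0 < lam → 0 ≤ eps →
      ∃ T K : ℝ, 0 < T ∧ 0 < K ∧
        ∀ (X : Type*) [MetricSpace X], GeodesicSpace X → DeltaHyperbolic X 1 →
          ∀ (α : ℝ → X) (I : Set ℝ), I.OrdConnected →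
            IsLocalQuasigeodesicOn α I T lam eps → IsQuasigeodesicOn α I K K := by
  intro lam eps hlam heps
  obtain ⟨N, hN⟩ := exists_mul_add_le_two_pow (2 * lam * (2 * lam + 1))
    (2 * lam * (5 * lam + eps + 2) + 7 * lam + eps)
  set h : ℝ := 2 ^ N
  set c : ℝ := lam * (2 * ((N + 1 : ℕ) * 1 + 1) + 1) + eps + ((N + 1 : ℕ) * 1 + 1) with hc
  have hh : 0 < h := by positivity
  refine ⟨2 * h, h ^ 2 + h, by positivity, by positivity, fun X _ hG hδ α I hI hα => ?_⟩
  have hgap : lam * (1 + 2 * (c + 3 * 1)) + eps ≤ h := calc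
    _ = 2 * lam * (2 * lam + 1) * N + (2 * lam * (5 * lam + eps + 2) + 7 * lam + eps) := by
      rw [hc]
      push_cast
      ring
    _ ≤ h := hN
  have hgp : ∀ a ∈ I, a + 2 * h ∈ I → gromovProduct (α a) (α (a + 2 * h)) (α (a + h)) ≤ c :=
    fun a ha ha' => gromovProduct_le_of_isQuasigeodesicOn hG hδ hlam.le (N + 1)
      (by rw [pow_succ]; linarith) (hα.isQuasigeodesicOn_Icc hI ha ha' (by linarith))
      ⟨by linarith, by linarith⟩
  exact (hα.isQuasigeodesicOn_of_gromovProduct_le (hδ.gromovHyperbolic hG) hI hlam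
    hh (by positivity) one_pos hgap hgp).mono
    (by rw [div_one]; exact le_add_of_nonneg_left (sq_nonneg h)) (by rw [div_one])
end

section
/- Let G be a group acting by isometries on a 1-hyperbolic geodesic metric space (X,d) with base point x ∈ X, let f, g, h ∈ G and let D > 0. Let τ be a subsegment of length 3D of a geodesic segment [x, ghfx]. Then the 24-neighborhood of τ contains a subsegment of length at least D − 40 of one of the geodesic segments [x, gx], g[x, hx], or gh[x, fx]. -/
set_option linter.unusedVariables false

/-! Every point of `[x, ghfx]` is `2`-close to the broken path `[x, gx] ∪ [gx, ghx] ∪ [ghx, ghfx]`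
(a geodesic quadrilateral is `2δ`-thin). Cut `τ` at the four points at spacing `D`; two of them are
close to the same side, and the subsegment of that side between their projections fellow-travels
the corresponding piece of `τ`, which has length at least `D`. -/

namespace IsGeodesicSegment

variable {X : Type*} [MetricSpace X] {s t : Set X} {a b p q : X}

theorem symm_s10 (hs : IsGeodesicSegment s a b) : IsGeodesicSegment s b a := by
  obtain ⟨f, hf0, hfd, hiso, rfl⟩ := hs
  have hflip : ∀ t ∈ Set.Icc 0 (dist a b), dist a b - t ∈ Set.Icc 0 (dist a b) :=
    fun t ht => ⟨by linarith [ht.2], by linarith [ht.1]⟩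
  refine ⟨fun t => f (dist a b - t), by simp [hfd], by simp [dist_comm b a, hf0], ?_, ?_⟩
  · intro t₁ ht₁ t₂ ht₂
    rw [dist_comm b a] at ht₁ ht₂
    rw [hiso _ (hflip t₁ ht₁) _ (hflip t₂ ht₂), abs_sub_comm]
    ring_nf
  · rw [dist_comm b a]
    ext z
    constructor
    · rintro ⟨t, ht, rfl⟩
      exact ⟨dist a b - t, hflip t ht, by simp only [sub_sub_cancel]⟩
    · rintro ⟨t, ht, rfl⟩
      exact ⟨dist a b - t, hflip t ht, rfl⟩

theorem left_mem (hs : IsGeodesicSegment s a b) : a ∈ s := by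
  obtain ⟨f, hf0, -, -, rfl⟩ := hs
  exact ⟨0, ⟨le_rfl, dist_nonneg⟩, hf0⟩

theorem right_mem (hs : IsGeodesicSegment s a b) : b ∈ s :=
  hs.symm_s10.left_mem

theorem dist_right_le (hs : IsGeodesicSegment s a b) (hp : p ∈ s) : dist p b ≤ dist a b := by
  obtain ⟨f, -, hfd, hiso, rfl⟩ := hs
  obtain ⟨t, ht, rfl⟩ := hp
  rw [← hfd, hiso t ht _ ⟨dist_nonneg, le_rfl⟩, hfd, abs_of_nonpos (by linarith [ht.2])]
  linarith [ht.1]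

theorem singleton (a : X) : IsGeodesicSegment {a} a a :=
  ⟨fun _ => a, rfl, rfl, by simp, by simp⟩

theorem image_Icc (f : ℝ → X)
    (hiso : ∀ t₁ ∈ Set.Icc 0 (dist a b), ∀ t₂ ∈ Set.Icc 0 (dist a b),
      dist (f t₁) (f t₂) = |t₁ - t₂|)
    {u₁ u₂ : ℝ} (h₀ : 0 ≤ u₁) (h₁₂ : u₁ ≤ u₂) (h₂ : u₂ ≤ dist a b) :
    IsGeodesicSegment (f '' Set.Icc u₁ u₂) (f u₁) (f u₂) := by
  have hmem : ∀ u ∈ Set.Icc u₁ u₂, u ∈ Set.Icc 0 (dist a b) :=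
    fun u hu => ⟨h₀.trans hu.1, hu.2.trans h₂⟩
  have hlen : dist (f u₁) (f u₂) = u₂ - u₁ := by
    rw [hiso u₁ (hmem _ ⟨le_rfl, h₁₂⟩) u₂ (hmem _ ⟨h₁₂, le_rfl⟩), abs_of_nonpos (by linarith)]
    ring
  have hshift : ∀ t ∈ Set.Icc 0 (u₂ - u₁), u₁ + t ∈ Set.Icc 0 (dist a b) :=
    fun t ht => hmem _ ⟨by linarith [ht.1], by linarith [ht.2]⟩
  refine ⟨fun t => f (u₁ + t), by simp, by simp [hlen], ?_, ?_⟩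
  · intro t₁ ht₁ t₂ ht₂
    rw [hlen] at ht₁ ht₂
    rw [hiso _ (hshift t₁ ht₁) _ (hshift t₂ ht₂)]
    ring_nf
  · rw [hlen]
    ext z
    constructor
    · rintro ⟨t, ht, rfl⟩
      exact ⟨t - u₁, ⟨by linarith [ht.1], by linarith [ht.2]⟩, by simp⟩
    · rintro ⟨t, ht, rfl⟩
      exact ⟨u₁ + t, ⟨by linarith [ht.1], by linarith [ht.2]⟩, rfl⟩

theorem exists_subsegment (hs : IsGeodesicSegment s a b) (hp : p ∈ s) (hq : q ∈ s) :
    ∃ t, IsGeodesicSegment t p q ∧ t ⊆ s := by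
  obtain ⟨f, -, -, hiso, rfl⟩ := hs
  obtain ⟨u₁, hu₁, rfl⟩ := hp
  obtain ⟨u₂, hu₂, rfl⟩ := hq
  have hsub : ∀ {v₁ v₂ : ℝ}, v₁ ∈ Set.Icc 0 (dist a b) → v₂ ∈ Set.Icc 0 (dist a b) →
      f '' Set.Icc v₁ v₂ ⊆ f '' Set.Icc 0 (dist a b) :=
    fun h₁ h₂ => Set.image_mono fun _ hv => ⟨h₁.1.trans hv.1, hv.2.trans h₂.2⟩
  rcases le_total u₁ u₂ with h | h
  · exact ⟨_, image_Icc f hiso hu₁.1 h hu₂.2, hsub hu₁ hu₂⟩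
  · exact ⟨_, (image_Icc f hiso hu₂.1 h hu₁.2).symm_s10, hsub hu₂ hu₁⟩

end IsGeodesicSegment

namespace InNbhd

variable {X : Type*} [MetricSpace X] {A B C : Set X} {r r' : ℝ}

theorem of_subset (h : A ⊆ B) (hr : 0 ≤ r) : InNbhd A B r :=
  fun p hp => ⟨p, h hp, by simpa using hr⟩

theorem mono (hAB : InNbhd A B r) (hB : B ⊆ C) (hr : r ≤ r') : InNbhd A C r' := by
  intro p hp
  obtain ⟨q, hq, hpq⟩ := hAB p hp
  exact ⟨q, hB hq, hpq.trans hr⟩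

theorem union (hA : InNbhd A C r) (hB : InNbhd B C r) : InNbhd (A ∪ B) C r := by
  rintro p (hp | hp)
  exacts [hA p hp, hB p hp]

theorem trans (hAB : InNbhd A B r) (hBC : InNbhd B C r') : InNbhd A C (r + r') := by
  intro p hp
  obtain ⟨q, hq, hpq⟩ := hAB p hp
  obtain ⟨z, hz, hqz⟩ := hBC q hq
  exact ⟨z, hz, (dist_triangle p q z).trans (add_le_add hpq hqz)⟩

end InNbhd

theorem IsGeodesicSegment.inNbhd_of_dist_le {X : Type*} [MetricSpace X] {s t : Set X}
    {a b : X} {r : ℝ} (hs : IsGeodesicSegment s a b) (hab : dist a b ≤ r) (hb : b ∈ t) :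
    InNbhd s t r :=
  fun _ hp => ⟨b, hb, (hs.dist_right_le hp).trans hab⟩

namespace DeltaHyperbolic

variable {X : Type*} [MetricSpace X] {δ : ℝ}

theorem nonneg (hhyp : DeltaHyperbolic X δ) (x : X) : 0 ≤ δ := by
  have hx := IsGeodesicSegment.singleton x
  obtain ⟨q, hq, hxq⟩ := hhyp x x x {x} {x} {x} hx hx hx x rfl
  simpa [show q = x by simpa using hq] using hxq

theorem quadrilateral (hgeo : GeodesicSpace X) (hhyp : DeltaHyperbolic X δ)
    {a b c d : X} {S s₁ s₂ s₃ : Set X} (hS : IsGeodesicSegment S a d)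
    (h₁ : IsGeodesicSegment s₁ a b) (h₂ : IsGeodesicSegment s₂ b c)
    (h₃ : IsGeodesicSegment s₃ c d) :
    InNbhd S (s₁ ∪ s₂ ∪ s₃) (2 * δ) := by
  obtain ⟨sac, hac⟩ := hgeo a c
  have hδ := hhyp.nonneg a
  have hdiag : InNbhd sac (s₁ ∪ s₂ ∪ s₃) δ :=
    (hhyp a c b sac s₁ s₂ hac h₁ h₂.symm_s10).mono Set.subset_union_left le_rfl
  have hside : InNbhd s₃ (s₁ ∪ s₂ ∪ s₃) δ := .of_subset Set.subset_union_right hδ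
  rw [two_mul]
  exact (hhyp a d c S sac s₃ hS hac h₃.symm_s10).trans (hdiag.union hside)

theorem inNbhd_of_endpoints_close (hgeo : GeodesicSpace X) (hhyp : DeltaHyperbolic X δ)
    {a b a' b' : X} {s t : Set X} {r : ℝ} (hs : IsGeodesicSegment s a b)
    (ht : IsGeodesicSegment t a' b') (haa' : dist a a' ≤ r) (hbb' : dist b b' ≤ r) :
    InNbhd s t (r + 2 * δ) := by
  obtain ⟨sab', hsab'⟩ := hgeo a b'
  obtain ⟨sbb', hsbb'⟩ := hgeo b b'
  obtain ⟨saa', hsaa'⟩ := hgeo a a'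
  have hδ := hhyp.nonneg a
  have hnear_a : InNbhd (saa' ∪ t) t r :=
    (hsaa'.inNbhd_of_dist_le haa' ht.left_mem).union
      (.of_subset subset_rfl (dist_nonneg.trans haa'))
  have hdiag : InNbhd sab' t (δ + r) :=
    (hhyp a b' a' sab' saa' t hsab' hsaa' ht.symm_s10).trans hnear_a
  have hnear_b : InNbhd sbb' t (δ + r) :=
    (hsbb'.inNbhd_of_dist_le hbb' ht.right_mem).mono subset_rfl (by linarith)
  exact ((hhyp a b b' s sab' sbb' hs hsab' hsbb').trans (hdiag.union hnear_b)).mono subset_rfl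
    (by linarith)

theorem exists_subsegment_near (hgeo : GeodesicSpace X) (hhyp : DeltaHyperbolic X δ)
    {σ t : Set X} {P Q p₁ p₂ q₁ q₂ : X} {r : ℝ} (hσ : IsGeodesicSegment σ P Q)
    (ht : IsGeodesicSegment t p₁ p₂) (hq₁ : q₁ ∈ σ) (hq₂ : q₂ ∈ σ)
    (h₁ : dist p₁ q₁ ≤ r) (h₂ : dist p₂ q₂ ≤ r) :
    ∃ τ', IsGeodesicSegment τ' q₁ q₂ ∧ τ' ⊆ σ ∧ dist p₁ p₂ - 2 * r ≤ dist q₁ q₂ ∧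
      InNbhd τ' t (r + 2 * δ) := by
  obtain ⟨τ', hτ', hτ'σ⟩ := hσ.exists_subsegment hq₁ hq₂
  refine ⟨τ', hτ', hτ'σ, ?_, hhyp.inNbhd_of_endpoints_close hgeo hτ' ht
    (by rwa [dist_comm]) (by rwa [dist_comm])⟩
  have := dist_triangle4 p₁ q₁ q₂ p₂
  rw [dist_comm q₂] at this
  linarith

theorem exists_long_subsegment_near (hgeo : GeodesicSpace X) (hhyp : DeltaHyperbolic X δ)
    {m : ℕ} {σ : Fin m → Set X} (hσ : ∀ k, ∃ P Q, IsGeodesicSegment (σ k) P Q)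
    {τ : Set X} {a b : X} {D r : ℝ} (hτ : IsGeodesicSegment τ a b) (hD : 0 ≤ D)
    (hlen : dist a b = m * D) (hcover : InNbhd τ (⋃ k, σ k) r) :
    ∃ k a' b' τ', IsGeodesicSegment τ' a' b' ∧ τ' ⊆ σ k ∧ D - 2 * r ≤ dist a' b' ∧
      InNbhd τ' τ (r + 2 * δ) := by
  obtain ⟨F, -, -, hFiso, rfl⟩ := id hτ
  have hmem : ∀ k : Fin (m + 1), (k : ℝ) * D ∈ Set.Icc 0 (dist a b) := fun k =>
    ⟨by positivity, by rw [hlen]; gcongr; exact_mod_cast Nat.lt_succ_iff.mp k.isLt⟩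
  have hcut : ∀ k : Fin (m + 1), ∃ c, ∃ q ∈ σ c, dist (F (k * D)) q ≤ r := fun k => by
    obtain ⟨q, hq, hpq⟩ := hcover _ ⟨_, hmem k, rfl⟩
    obtain ⟨c, hc⟩ := Set.mem_iUnion.mp hq
    exact ⟨c, q, hc, hpq⟩
  choose c q hqσ hpq using hcut
  obtain ⟨i, j, hij, hcij⟩ := Fintype.exists_ne_map_eq_of_card_lt c (by simp)
  obtain ⟨t, ht, htτ⟩ := hτ.exists_subsegment ⟨_, hmem i, rfl⟩ ⟨_, hmem j, rfl⟩
  have hspread : D ≤ dist (F (i * D)) (F (j * D)) := by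
    have hij' : (1 : ℝ) ≤ |(i : ℝ) - j| := by
      have : (i : ℤ) ≠ j := by exact_mod_cast Fin.val_injective.ne hij
      exact_mod_cast Int.one_le_abs (sub_ne_zero.mpr this)
    rw [hFiso _ (hmem i) _ (hmem j), ← sub_mul, abs_mul, abs_of_nonneg hD]
    nlinarith
  obtain ⟨P, Q, hσi⟩ := hσ (c i)
  obtain ⟨τ', hτ', hτ'σ, hlen', hnear⟩ :=
    hhyp.exists_subsegment_near hgeo hσi ht (hqσ i) (hcij ▸ hqσ j) (hpq i) (hpq j)
  exact ⟨c i, q i, q j, τ', hτ', hτ'σ, by linarith, hnear.mono htτ le_rfl⟩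

end DeltaHyperbolic

theorem corollary17_general
    (G : Type*) [Group G] (X : Type*) [MetricSpace X] [MulAction G X]
    (hgeo : GeodesicSpace X) (hhyp : DeltaHyperbolic X 1)
    (x : X) (f g h : G) (D : ℝ)
    (S : Set X) (hS : IsGeodesicSegment S x ((g * h * f) • x))
    (a b : X)
    (τ : Set X) (hτ : IsGeodesicSegment τ a b) (hτS : τ ⊆ S)
    (hlen : dist a b = 3 * D) :
    ∃ u v : G,
      ((u = 1 ∧ v = g) ∨ (u = g ∧ v = g * h) ∨ (u = g * h ∧ v = g * h * f)) ∧
      ∃ Seg : Set X, IsGeodesicSegment Seg (u • x) (v • x) ∧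
        ∃ a' ∈ Seg, ∃ b' ∈ Seg, ∃ τ' : Set X, IsGeodesicSegment τ' a' b' ∧ τ' ⊆ Seg ∧
          D - 40 ≤ dist a' b' ∧ InNbhd τ' τ 24 := by
  obtain ⟨s₁, hs₁⟩ := hgeo x (g • x)
  obtain ⟨s₂, hs₂⟩ := hgeo (g • x) ((g * h) • x)
  obtain ⟨s₃, hs₃⟩ := hgeo ((g * h) • x) ((g * h * f) • x)
  let side : Fin 3 → Set X := ![s₁, s₂, s₃]
  have hside : ∀ k, ∃ u v : G,
      ((u = 1 ∧ v = g) ∨ (u = g ∧ v = g * h) ∨ (u = g * h ∧ v = g * h * f)) ∧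
      IsGeodesicSegment (side k) (u • x) (v • x) := by
    intro k
    fin_cases k
    exacts [⟨1, g, by simp, by simpa [side] using hs₁⟩, ⟨g, g * h, by simp, hs₂⟩,
      ⟨g * h, g * h * f, by simp, hs₃⟩]
  have hunion : s₁ ∪ s₂ ∪ s₃ ⊆ ⋃ k, side k := by
    rintro q ((hq | hq) | hq)
    exacts [Set.mem_iUnion.mpr ⟨0, hq⟩, Set.mem_iUnion.mpr ⟨1, hq⟩, Set.mem_iUnion.mpr ⟨2, hq⟩]
  have hquad : InNbhd S (⋃ k, side k) 2 :=
    (hhyp.quadrilateral hgeo hS hs₁ hs₂ hs₃).mono hunion (by norm_num)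
  have hD : 0 ≤ D := by linarith [dist_nonneg (x := a) (y := b)]
  obtain ⟨k, a', b', τ', hτ', hτ'σ, hlen', hnear⟩ :=
    hhyp.exists_long_subsegment_near hgeo (fun k => (hside k).elim fun _ ⟨_, _, hk⟩ => ⟨_, _, hk⟩)
      hτ hD (by rw [hlen]; norm_num) fun p hp => hquad p (hτS hp)
  obtain ⟨u, v, huv, hk⟩ := hside k
  exact ⟨u, v, huv, side k, hk, a', hτ'σ hτ'.left_mem, b', hτ'σ hτ'.right_mem, τ', hτ', hτ'σ,
    by linarith, hnear.mono subset_rfl (by norm_num)⟩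

/-- **Corollary 17.** Let `f, g, h ∈ G` act by isometries on a `1`-hyperbolic geodesic
space with base point `x`, and let `τ` be a subsegment of length `3D` of a geodesic
`[x, ghfx]`. Then the `24`-neighborhood of `τ` contains a subsegment of length at least
`D - 40` of one of the geodesic segments `[x, gx]`, `g[x, hx]`, `gh[x, fx]`. -/
theorem corollary17
    (G : Type*) [Group G] (X : Type*) [MetricSpace X] [MulAction G X]
    (hgeo : GeodesicSpace X) (hhyp : DeltaHyperbolic X 1)
    (hiso : ∀ (g : G) (a b : X), dist (g • a) (g • b) = dist a b)
    (x : X) (f g h : G) (D : ℝ) (hD : 0 < D)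
    (S : Set X) (hS : IsGeodesicSegment S x ((g * h * f) • x))
    (a b : X) (ha : a ∈ S) (hb : b ∈ S)
    (τ : Set X) (hτ : IsGeodesicSegment τ a b) (hτS : τ ⊆ S)
    (hlen : dist a b = 3 * D) :
    ∃ u v : G,
      ((u = 1 ∧ v = g) ∨ (u = g ∧ v = g * h) ∨ (u = g * h ∧ v = g * h * f)) ∧
      ∃ Seg : Set X, IsGeodesicSegment Seg (u • x) (v • x) ∧
        ∃ a' ∈ Seg, ∃ b' ∈ Seg, ∃ τ' : Set X, IsGeodesicSegment τ' a' b' ∧ τ' ⊆ Seg ∧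
          D - 40 ≤ dist a' b' ∧ InNbhd τ' τ 24 :=
  corollary17_general G X hgeo hhyp x f g h D S hS a b τ hτ hτS hlen
end
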